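/- Let G be a 2-edge-connected simple graph and let v be a vertex of G whose degree is odd. Then there exists a cycle of even length in G containing the vertex v. -/

import Mathlib

/-!
Suppose every cycle through `v` is odd. Grow a flower at `v`, that is, a family of cycles through
`v` any two of which meet only in `v`. A cycle through `v` uses an even number of the edges at `v`,
so, `deg v` being odd, some edge `vw` is used by no petal. As `vw` is not a bridge, there is a path
from `w` to `v` avoiding `vw`; stop it at the first vertex `x` of the flower. If `x = v`, this
closes a new petal. Otherwise `x` lies on a petal `C`, and the two arcs of `C` between `v` and `x`
together with the new `v`–`x` path form a theta graph, whose three cycles cannot all be odd.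
Hence the flower grows forever, which is absurd since it has at most `deg v` petals.
-/

open SimpleGraph

/-- A graph is 2-edge-connected if it is connected and remains connected after
the deletion of any single edge. -/
def TwoEdgeConnected {V : Type*} (G : SimpleGraph V) : Prop :=
  G.Connected ∧ ∀ e ∈ G.edgeSet, (G.deleteEdges {e}).Connected

namespace SimpleGraph

variable {V : Type*} {G : SimpleGraph V}

namespace Walk

lemma IsPath.append {u v w : V} {p : G.Walk u v} {q : G.Walk v w} (hp : p.IsPath)
    (hq : q.IsPath) (hpq : ∀ y ∈ p.support, y ∈ q.support → y = v) : (p.append q).IsPath := by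
  have hq' := hq.support_nodup
  rw [← q.cons_tail_support, List.nodup_cons] at hq'
  rw [isPath_def, support_append]
  refine hp.support_nodup.append hq'.2 fun y hyp hyq => ?_
  obtain rfl := hpq y hyp (List.mem_of_mem_tail hyq)
  exact hq'.1 hyq

lemma exists_eq_append_of_end_mem (S : Set V) {u v : V} (p : G.Walk u v) (hv : v ∈ S) :
    ∃ x ∈ S, ∃ (q : G.Walk u x) (r : G.Walk x v), p = q.append r ∧
      ∀ y ∈ q.support, y ∈ S → y = x := by
  induction p with
  | nil => exact ⟨_, hv, nil, nil, rfl, fun y hy _ => by simpa using hy⟩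
  | @cons a b c h p ih =>
    by_cases ha : a ∈ S
    · exact ⟨a, ha, nil, cons h p, rfl, fun y hy _ => by simpa using hy⟩
    · obtain ⟨x, hxS, q, r, rfl, hq⟩ := ih hv
      refine ⟨x, hxS, cons h q, r, rfl, fun y hy hyS => ?_⟩
      rw [support_cons, List.mem_cons] at hy
      rcases hy with rfl | hy
      exacts [absurd hyS ha, hq y hy hyS]

lemma IsCycle.isPath_dropUntil [DecidableEq V] {v x : V} {c : G.Walk v v} (hc : c.IsCycle)
    (hx : x ∈ c.support) (hxv : x ≠ v) : (c.dropUntil x hx).IsPath :=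
  (c.take_spec hx ▸ hc).isPath_of_append_right (not_nil_of_ne hxv.symm)

lemma isCycle_cons_append {u w x : V} (h : G.Adj u w) {p : G.Walk w x} {q : G.Walk x u}
    (hp : p.IsPath) (hq : q.IsPath) (hpq : ∀ y ∈ p.support, y ∈ q.support → y = x)
    (hu : u ∉ p.support) (huw : s(u, w) ∉ q.edges) : (cons h (p.append q)).IsCycle := by
  rw [cons_isCycle_iff, edges_append, List.mem_append]
  exact ⟨hp.append hq hpq, fun he => he.elim (hu <| p.fst_mem_support_of_mem_edges ·) huw⟩

lemma exists_even_isCycle_of_theta [DecidableEq V] {v x w : V} {c : G.Walk v v}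
    (hc : c.IsCycle) (hx : x ∈ c.support) (hxv : x ≠ v) (h : G.Adj v w)
    (hvw : s(v, w) ∉ c.edges) {p : G.Walk w x} (hp : p.IsPath)
    (hpc : ∀ y ∈ p.support, y ∈ c.support → y = x) :
    ∃ d : G.Walk v v, d.IsCycle ∧ Even d.length := by
  have hv : v ∉ p.support := fun hv => hxv (hpc v hv c.start_mem_support).symm
  have hda := isCycle_cons_append h hp (hc.isPath_takeUntil hx).reverse
    (fun y hy hy' => hpc y hy (c.support_takeUntil_subset_support hx (by simpa using hy'))) hv
    (fun he => hvw (c.edges_takeUntil_subset_edges hx (by simpa using he)))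
  have hdb := isCycle_cons_append h hp (hc.isPath_dropUntil hx hxv)
    (fun y hy hy' => hpc y hy (c.support_dropUntil_subset_support hx hy')) hv
    (fun he => hvw (c.edges_dropUntil_subset_edges hx he))
  have hab : (c.takeUntil x hx).length + (c.dropUntil x hx).length = c.length := by
    rw [← length_append, take_spec]
  -- with `c` split at `x` into arcs `A` and `B`, the three cycles have lengths `|A| + |B|`,
  -- `|p| + |A| + 1` and `|p| + |B| + 1`, whose sum is even
  by_contra! hodd
  have hc' := hodd c hc
  have hda' := hodd _ hda
  have hdb' := hodd _ hdb
  simp only [length_cons, length_append, length_reverse, Nat.not_even_iff_odd, Nat.odd_iff]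
    at hc' hda' hdb'
  omega

lemma IsCycle.even_length_filter_mem_edges [DecidableEq V] {v : V} {c : G.Walk v v}
    (hc : c.IsCycle) : Even (c.edges.filter (v ∈ ·)).length := by
  rw [← List.countP_eq_length_filter]
  exact (hc.isTrail.even_countP_edges_iff v).mpr fun h => absurd rfl h

lemma IsCycle.length_filter_mem_edges_pos [DecidableEq V] {v : V} {c : G.Walk v v}
    (hc : c.IsCycle) : 0 < (c.edges.filter (v ∈ ·)).length := by
  cases c with
  | nil => exact absurd hc (by simp)
  | cons h p => simp

end Walk

open Walk

variable {v : V}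

def IsFlower (v : V) (L : List (G.Walk v v)) : Prop :=
  (∀ c ∈ L, c.IsCycle) ∧ L.Pairwise fun c c' => ∀ y ∈ c.support, y ∈ c'.support → y = v

lemma isFlower_nil : IsFlower v ([] : List (G.Walk v v)) := ⟨by simp, .nil⟩

lemma isFlower_cons {c : G.Walk v v} {L : List (G.Walk v v)} :
    IsFlower v (c :: L) ↔
      c.IsCycle ∧ (∀ c' ∈ L, ∀ y ∈ c.support, y ∈ c'.support → y = v) ∧ IsFlower v L := by
  simp only [IsFlower, List.forall_mem_cons, List.pairwise_cons]
  tauto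

lemma IsFlower.exists_cons_or_exists_even_isCycle {L : List (G.Walk v v)} (hL : IsFlower v L)
    {w : V} (h : G.Adj v w) (hw : ∀ c ∈ L, s(v, w) ∉ c.edges)
    (hreach : (G.deleteEdges {s(v, w)}).Reachable w v) :
    (∃ c, IsFlower v (c :: L)) ∨ ∃ d : G.Walk v v, d.IsCycle ∧ Even d.length := by
  classical
  obtain ⟨p, hp, hpe⟩ : ∃ p : G.Walk w v, p.IsPath ∧ s(v, w) ∉ p.edges := by
    obtain ⟨p, hp⟩ := reachable_deleteEdges_iff_exists_walk.mp hreach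
    exact ⟨p.bypass, p.bypass_isPath, fun he => hp (p.edges_bypass_subset_edges he)⟩
  obtain ⟨x, hxS, q, r, rfl, hq⟩ := p.exists_eq_append_of_end_mem
    {y | y = v ∨ ∃ c ∈ L, y ∈ c.support} (Or.inl rfl)
  rcases eq_or_ne x v with rfl | hxv
  · left
    refine ⟨cons h q, isFlower_cons.mpr ⟨?_, ?_, hL⟩⟩
    · rw [edges_append, List.mem_append, not_or] at hpe
      exact (cons_isCycle_iff q h).mpr ⟨hp.of_append_left, hpe.1⟩
    · intro c hc y hy hyc
      rw [support_cons, List.mem_cons] at hy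
      exact hy.elim id fun hy => hq y hy (Or.inr ⟨c, hc, hyc⟩)
  · obtain ⟨c, hcL, hxc⟩ := hxS.resolve_left hxv
    exact Or.inr <| exists_even_isCycle_of_theta (hL.1 c hcL) hxc hxv h (hw c hcL)
      hp.of_append_left fun y hy hyc => hq y hy (Or.inr ⟨c, hcL, hyc⟩)

section Counting

variable [DecidableEq V]

def petalEdges (L : List (G.Walk v v)) : List (Sym2 V) :=
  L.flatMap fun c => c.edges.filter (v ∈ ·)

lemma IsFlower.nodup_petalEdges {L : List (G.Walk v v)} (hL : IsFlower v L) :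
    (petalEdges L).Nodup := by
  induction L with
  | nil => simp [petalEdges]
  | cons c L ih =>
    obtain ⟨hc, hcL, hL⟩ := isFlower_cons.mp hL
    refine (hc.edges_nodup.filter _).append (ih hL) fun e he he' => ?_
    obtain ⟨c', hc', he'⟩ := List.mem_flatMap.mp he'
    simp only [List.mem_filter, decide_eq_true_eq] at he he'
    obtain ⟨a, rfl⟩ := Sym2.mem_iff_exists.mp he.2
    obtain rfl := hcL c' hc' a (c.snd_mem_support_of_mem_edges he.1)
      (c'.snd_mem_support_of_mem_edges he'.1)
    exact (c.adj_of_mem_edges he.1).ne rfl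

lemma IsFlower.even_length_petalEdges {L : List (G.Walk v v)} (hL : IsFlower v L) :
    Even (petalEdges L).length := by
  induction L with
  | nil => simp [petalEdges]
  | cons c L ih =>
    obtain ⟨hc, -, hL⟩ := isFlower_cons.mp hL
    simpa [petalEdges] using hc.even_length_filter_mem_edges.add (ih hL)

lemma IsFlower.length_le_length_petalEdges {L : List (G.Walk v v)} (hL : IsFlower v L) :
    L.length ≤ (petalEdges L).length := by
  induction L with
  | nil => simp
  | cons c L ih =>
    obtain ⟨hc, -, hL⟩ := isFlower_cons.mp hL
    have := hc.length_filter_mem_edges_pos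
    simp only [petalEdges, List.flatMap_cons, List.length_append, List.length_cons] at ih ⊢
    have := ih hL
    omega

lemma mem_incidenceSet_of_mem_petalEdges {L : List (G.Walk v v)} {e : Sym2 V}
    (he : e ∈ petalEdges L) : e ∈ G.incidenceSet v := by
  obtain ⟨c, -, he⟩ := List.mem_flatMap.mp he
  rw [List.mem_filter, decide_eq_true_eq] at he
  exact ⟨c.edges_subset_edgeSet he.1, he.2⟩

variable [Fintype (G.neighborSet v)]

lemma IsFlower.length_petalEdges_le_degree {L : List (G.Walk v v)} (hL : IsFlower v L) :
    (petalEdges L).length ≤ G.degree v := by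
  rw [← card_incidenceFinset_eq_degree, ← List.toFinset_card_of_nodup hL.nodup_petalEdges]
  exact Finset.card_le_card fun e he =>
    (G.mem_incidenceFinset v e).mpr (mem_incidenceSet_of_mem_petalEdges (List.mem_toFinset.mp he))

lemma IsFlower.length_le_degree {L : List (G.Walk v v)} (hL : IsFlower v L) :
    L.length ≤ G.degree v :=
  hL.length_le_length_petalEdges.trans hL.length_petalEdges_le_degree

lemma IsFlower.exists_adj_forall_notMem_edges {L : List (G.Walk v v)} (hL : IsFlower v L)
    (hdeg : Odd (G.degree v)) : ∃ w, G.Adj v w ∧ ∀ c ∈ L, s(v, w) ∉ c.edges := by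
  have hlt : (petalEdges L).toFinset.card < (G.incidenceFinset v).card := by
    rw [List.toFinset_card_of_nodup hL.nodup_petalEdges, card_incidenceFinset_eq_degree]
    refine hL.length_petalEdges_le_degree.lt_of_ne fun h => ?_
    exact Nat.not_even_iff_odd.mpr hdeg (h ▸ hL.even_length_petalEdges)
  obtain ⟨e, he, he'⟩ := Finset.exists_mem_notMem_of_card_lt_card hlt
  obtain ⟨heG, hve⟩ := (G.mem_incidenceFinset v e).mp he
  obtain ⟨w, rfl⟩ := Sym2.mem_iff_exists.mp hve
  refine ⟨w, heG, fun c hc hvw => he' (List.mem_toFinset.mpr ?_)⟩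
  exact List.mem_flatMap.mpr ⟨c, hc, List.mem_filter.mpr ⟨hvw, by simp⟩⟩

end Counting

end SimpleGraph

/-- In a 2-edge-connected graph, every vertex of odd degree lies on an even
cycle. -/
theorem stmt_6 {V : Type*} [Fintype V] (G : SimpleGraph V) [DecidableRel G.Adj]
    (hG : TwoEdgeConnected G) (v : V) (hdeg : Odd (G.degree v)) :
    ∃ (b : V) (D : G.Walk b b), D.IsCycle ∧ Even D.length ∧ v ∈ D.support := by
  classical
  suffices ∃ D : G.Walk v v, D.IsCycle ∧ Even D.length from
    let ⟨D, hD, heven⟩ := this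
    ⟨v, D, hD, heven, D.start_mem_support⟩
  by_contra! hodd
  have hflower : ∀ k, ∃ L : List (G.Walk v v), IsFlower v L ∧ L.length = k := by
    intro k
    induction k with
    | zero => exact ⟨[], isFlower_nil, rfl⟩
    | succ k ih =>
      obtain ⟨L, hL, rfl⟩ := ih
      obtain ⟨w, hvw, hw⟩ := hL.exists_adj_forall_notMem_edges hdeg
      have hreach := (hG.2 _ (G.mem_edgeSet.mpr hvw)).preconnected w v
      obtain ⟨c, hc⟩ | ⟨D, hD, heven⟩ := hL.exists_cons_or_exists_even_isCycle hvw hw hreach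
      exacts [⟨c :: L, hc, rfl⟩, absurd heven (hodd D hD)]
  obtain ⟨L, hL, hlen⟩ := hflower (G.degree v + 1)
  have := hL.length_le_degree
  omega
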